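/- Let k ≥ 1 and let Ω be a real symmetric positive definite (k+1)×(k+1) matrix. If (M̄, Ȳ_0, …, Ȳ_k) and (M̃, Ỹ_0, …, Ỹ_k) are two KKT pairs for (P) at Ω, then M̄ = M̃ and Ȳ_i = Ỹ_i for every i = 0,…,k. (Uniqueness of the primal and dual solutions of (P), established in part (ii) of the proof of Lemma 3 in the paper.) -/

import Mathlib

open Matrix MeasureTheory

/-- The constraint matrices `C_0 = 0` and
`C_i = [[0, e_i/2], [e_iᵀ/2, -ylow]]` for `i = 1,…,k` of the primal SDP (P). -/
noncomputable def Cmat (k : ℕ) (ylow : ℝ) : Fin (k + 1) → Matrix (Fin (k + 1)) (Fin (k + 1)) ℝ :=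
  Fin.cases 0 fun i : Fin k =>
    Matrix.of fun a b =>
      if a = Fin.last k ∧ b = Fin.last k then -ylow
      else if a = i.castSucc ∧ b = Fin.last k then 1 / 2
      else if a = Fin.last k ∧ b = i.castSucc then 1 / 2
      else 0

/-- A symmetric matrix `M` is feasible for (P) if `M - C_i ⪯ 0` for `i = 0,…,k`. -/
def PFeasible (k : ℕ) (ylow : ℝ) (M : Matrix (Fin (k + 1)) (Fin (k + 1)) ℝ) : Prop :=
  M.IsSymm ∧ ∀ i : Fin (k + 1), (Cmat k ylow i - M).PosSemidef


/-- A KKT pair for (P) at `Ω`: a feasible `M̄` together with positive semidefinite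
multipliers `Ȳ_0, …, Ȳ_k` with `∑ Ȳ_i = Ω` and `Ȳ_i (M̄ - C_i) = 0` for all `i`. -/
def KKTpair (k : ℕ) (ylow : ℝ) (Ω M : Matrix (Fin (k + 1)) (Fin (k + 1)) ℝ)
    (Y : Fin (k + 1) → Matrix (Fin (k + 1)) (Fin (k + 1)) ℝ) : Prop :=
  PFeasible k ylow M ∧ (∀ i, (Y i).PosSemidef) ∧ (∑ i, Y i) = Ω ∧
    ∀ i, Y i * (M - Cmat k ylow i) = 0

/-!
If `(M, Y)` and `(M', Y')` are KKT pairs, the numbers `tr (Y i (C i - M'))` are nonnegative,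
being traces of products of positive semidefinite matrices, and they sum to `tr (Ω (M - M'))`.
Adding the same identity with the roles exchanged gives `0`, so every `Y i (C i - M')` vanishes,
hence `Ω (M - M') = 0` and `M = M'`.

For the multipliers: the quadratic forms of all `C j` vanish on vectors with last coordinate `0`,
so such a vector in the kernel of one `C i - M` lies in the kernel of every `C j - M`, hence in
those of `M` and of every `C j`, which forces it to be `0`. Thus each kernel is contained in a
line `ℝ w i`, and `Y i`, whose columns lie in it, equals `c i • w i w iᵀ`. Then
`Ω = Wᵀ diag(c) W` with `W` invertible, which determines `c`.
-/

namespace Matrix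

section RCLike

variable {𝕜 n : Type*} [RCLike 𝕜] [Fintype n]

open scoped ComplexOrder MatrixOrder

lemma trace_conjTranspose_mul_self_mul_conjTranspose_mul_self (S T : Matrix n n 𝕜) :
    (Sᴴ * S * (Tᴴ * T)).trace = ((T * Sᴴ)ᴴ * (T * Sᴴ)).trace := by
  rw [conjTranspose_mul, conjTranspose_conjTranspose, Matrix.mul_assoc, trace_mul_comm,
    Matrix.mul_assoc, Matrix.mul_assoc, Matrix.mul_assoc]

lemma PosSemidef.trace_mul_nonneg {A B : Matrix n n 𝕜} (hA : A.PosSemidef) (hB : B.PosSemidef) :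
    0 ≤ (A * B).trace := by
  classical
  obtain ⟨S, rfl⟩ := CStarAlgebra.nonneg_iff_eq_star_mul_self.mp hA.nonneg
  obtain ⟨T, rfl⟩ := CStarAlgebra.nonneg_iff_eq_star_mul_self.mp hB.nonneg
  rw [star_eq_conjTranspose, star_eq_conjTranspose,
    trace_conjTranspose_mul_self_mul_conjTranspose_mul_self]
  exact (posSemidef_conjTranspose_mul_self _).trace_nonneg

lemma PosSemidef.mul_eq_zero_of_trace_mul_eq_zero {A B : Matrix n n 𝕜} (hA : A.PosSemidef)
    (hB : B.PosSemidef) (h : (A * B).trace = 0) : A * B = 0 := by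
  classical
  obtain ⟨S, rfl⟩ := CStarAlgebra.nonneg_iff_eq_star_mul_self.mp hA.nonneg
  obtain ⟨T, rfl⟩ := CStarAlgebra.nonneg_iff_eq_star_mul_self.mp hB.nonneg
  simp only [star_eq_conjTranspose] at h ⊢
  rw [trace_conjTranspose_mul_self_mul_conjTranspose_mul_self,
    trace_conjTranspose_mul_self_eq_zero_iff] at h
  have hST : S * Tᴴ = 0 := by simpa using congrArg (·ᴴ) h
  rw [Matrix.mul_assoc, ← Matrix.mul_assoc S, hST, Matrix.zero_mul, Matrix.mul_zero]

end RCLike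

lemma exists_forall_mulVec_eq_zero_eq_smul {K m n : Type*} [Field K] [Fintype n]
    {A : Matrix m n K} (l : n) (h : ∀ x, A *ᵥ x = 0 → x l = 0 → x = 0) :
    ∃ v, ∀ x, A *ᵥ x = 0 → x = x l • v := by
  by_cases hv : ∃ v, A *ᵥ v = 0 ∧ v l = 1
  · obtain ⟨v, hv, hvl⟩ := hv
    refine ⟨v, fun x hx => sub_eq_zero.mp (h _ ?_ ?_)⟩
    · rw [mulVec_sub, mulVec_smul, hx, hv, smul_zero, sub_zero]
    · simp [hvl]
  · refine ⟨0, fun x hx => ?_⟩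
    rw [smul_zero]
    refine h x hx (by_contra fun hxl => hv ⟨(x l)⁻¹ • x, ?_, ?_⟩)
    · rw [mulVec_smul, hx, smul_zero]
    · simp [inv_mul_cancel₀ hxl]

lemma eq_smul_vecMulVec_of_mul_eq_zero {R n : Type*} [CommRing R] [Fintype n] [DecidableEq n]
    {A Y : Matrix n n R} {v : n → R} (l : n) (hker : ∀ x, A *ᵥ x = 0 → x = x l • v)
    (hY : Y.IsSymm) (hAY : A * Y = 0) : Y = Y l l • vecMulVec v v := by
  have hrow : ∀ b, Y b = Y b l • v := fun b => hker _ <| by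
    rw [show Y b = Y.col b from (congrFun hY.eq b).symm, ← mulVec_single_one, mulVec_mulVec,
      hAY, zero_mulVec]
  ext a b
  have hal : Y a l = Y l l * v a := by rw [← hY.apply]; exact congrFun (hrow l) a
  rw [hrow a, Pi.smul_apply, hal, Matrix.smul_apply, vecMulVec_apply, smul_eq_mul, smul_eq_mul,
    mul_assoc]

lemma sum_smul_vecMulVec_eq {R ι n : Type*} [CommRing R] [Fintype ι] [DecidableEq ι]
    (w : ι → n → R) (c : ι → R) :
    ∑ i, c i • vecMulVec (w i) (w i) = (of w)ᵀ * diagonal c * of w := by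
  ext a b
  rw [mul_apply]
  simp only [sum_apply, Matrix.smul_apply, vecMulVec_apply, smul_eq_mul, mul_diagonal,
    transpose_apply, of_apply]
  exact Finset.sum_congr rfl fun i _ => by ring

lemma eq_of_sum_smul_vecMulVec_eq {K n : Type*} [Field K] [Fintype n] [DecidableEq n]
    {w : n → n → K} {c d : n → K} (hc : IsUnit (∑ i, c i • vecMulVec (w i) (w i)))
    (h : ∑ i, c i • vecMulVec (w i) (w i) = ∑ i, d i • vecMulVec (w i) (w i)) : c = d := by
  rw [sum_smul_vecMulVec_eq] at hc
  rw [sum_smul_vecMulVec_eq, sum_smul_vecMulVec_eq] at h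
  have hw : IsUnit (of w) := by
    rw [isUnit_iff_isUnit_det] at hc ⊢
    rw [det_mul] at hc
    exact isUnit_of_mul_isUnit_right hc
  exact diagonal_injective <|
    ((isUnit_transpose _).mpr hw).mul_left_cancel (hw.mul_right_cancel h)

end Matrix

section KKT

open scoped ComplexOrder

variable {𝕜 n ι : Type*} [RCLike 𝕜] [Fintype n] [Fintype ι]

/-- KKT conditions of `max ⟪Ω, M⟫` subject to `M ⪯ C i` for all `i`. -/
structure IsKKT (C : ι → Matrix n n 𝕜) (Ω M : Matrix n n 𝕜) (Y : ι → Matrix n n 𝕜) :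
    Prop where
  feasible : ∀ i, (C i - M).PosSemidef
  posSemidef : ∀ i, (Y i).PosSemidef
  sum_eq : ∑ i, Y i = Ω
  complementary : ∀ i, Y i * (M - C i) = 0

namespace IsKKT

variable {C : ι → Matrix n n 𝕜} {Ω M M' : Matrix n n 𝕜} {Y Y' : ι → Matrix n n 𝕜}

lemma mul_sub_eq (h : IsKKT C Ω M Y) (M' : Matrix n n 𝕜) (i : ι) :
    Y i * (C i - M') = Y i * (M - M') := by
  rw [← sub_add_sub_cancel (C i) M M', Matrix.mul_add, ← neg_sub M, Matrix.mul_neg,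
    h.complementary, neg_zero, zero_add]

lemma sum_trace_mul_sub (h : IsKKT C Ω M Y) (M' : Matrix n n 𝕜) :
    ∑ i, (Y i * (C i - M')).trace = (Ω * (M - M')).trace := by
  simp_rw [h.mul_sub_eq M', ← trace_sum, ← Finset.sum_mul, h.sum_eq]

lemma trace_mul_sub_nonneg (h : IsKKT C Ω M Y) (h' : IsKKT C Ω M' Y') (i : ι) :
    0 ≤ (Y i * (C i - M')).trace :=
  (h.posSemidef i).trace_mul_nonneg (h'.feasible i)

lemma mul_sub_eq_zero (h : IsKKT C Ω M Y) (h' : IsKKT C Ω M' Y') (i : ι) :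
    Y i * (C i - M') = 0 := by
  have hnonneg : ∀ i ∈ Finset.univ, 0 ≤ (Y i * (C i - M')).trace := fun i _ =>
    h.trace_mul_sub_nonneg h' i
  have hsum : ∑ i, (Y i * (C i - M')).trace + ∑ i, (Y' i * (C i - M)).trace = 0 := by
    rw [h.sum_trace_mul_sub, h'.sum_trace_mul_sub, ← trace_add, ← Matrix.mul_add,
      sub_add_sub_cancel, sub_self, Matrix.mul_zero, trace_zero]
  have hzero := ((add_eq_zero_iff_of_nonneg (Finset.sum_nonneg hnonneg)
    (Finset.sum_nonneg fun i _ => h'.trace_mul_sub_nonneg h i)).mp hsum).1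
  exact (h.posSemidef i).mul_eq_zero_of_trace_mul_eq_zero (h'.feasible i)
    ((Finset.sum_eq_zero_iff_of_nonneg hnonneg).mp hzero i (Finset.mem_univ i))

lemma eq [DecidableEq n] (hΩ : IsUnit Ω) (h : IsKKT C Ω M Y) (h' : IsKKT C Ω M' Y') :
    M = M' := by
  have : Ω * (M - M') = 0 := by
    rw [← h.sum_eq, Finset.sum_mul]
    exact Finset.sum_eq_zero fun i _ => by rw [← h.mul_sub_eq, h.mul_sub_eq_zero h']
  rwa [hΩ.mul_right_eq_zero, sub_eq_zero] at this

lemma sub_mul_eq_zero (h : IsKKT C Ω M Y) (i : ι) : (C i - M) * Y i = 0 := by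
  have := congrArg (·ᴴ) (h.complementary i)
  simp only [conjTranspose_mul, (h.posSemidef i).isHermitian.eq, conjTranspose_zero] at this
  rwa [← neg_sub, conjTranspose_neg, (h.feasible i).isHermitian.eq, Matrix.neg_mul,
    neg_eq_zero] at this

end IsKKT

end KKT

lemma Cmat_zero (k : ℕ) (ylow : ℝ) : Cmat k ylow 0 = 0 := rfl

lemma Cmat_succ_mulVec_of_last_eq_zero (k : ℕ) (ylow : ℝ) (i : Fin k) {x : Fin (k + 1) → ℝ}
    (hx : x (Fin.last k) = 0) :
    Cmat k ylow i.succ *ᵥ x = Pi.single (Fin.last k) (x i.castSucc / 2) := by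
  ext a
  simp only [Cmat, Fin.cases_succ, mulVec, dotProduct, of_apply]
  rw [Fin.sum_univ_castSucc, hx, mul_zero, add_zero]
  by_cases ha : a = Fin.last k
  · subst ha
    simp [Fin.castSucc_ne_last, div_eq_inv_mul]
  · simp [ha, Fin.castSucc_ne_last]

lemma dotProduct_Cmat_mulVec_of_last_eq_zero (k : ℕ) (ylow : ℝ) (j : Fin (k + 1))
    {x : Fin (k + 1) → ℝ} (hx : x (Fin.last k) = 0) : x ⬝ᵥ Cmat k ylow j *ᵥ x = 0 := by
  cases j using Fin.cases with
  | zero => rw [Cmat_zero, zero_mulVec, dotProduct_zero]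
  | succ i => rw [Cmat_succ_mulVec_of_last_eq_zero k ylow i hx, dotProduct_single, hx, zero_mul]

lemma eq_zero_of_Cmat_sub_mulVec_eq_zero {k : ℕ} {ylow : ℝ}
    {M : Matrix (Fin (k + 1)) (Fin (k + 1)) ℝ}
    (hM : ∀ j, (Cmat k ylow j - M).PosSemidef) {i : Fin (k + 1)} {x : Fin (k + 1) → ℝ}
    (hx : (Cmat k ylow i - M) *ᵥ x = 0) (hlast : x (Fin.last k) = 0) : x = 0 := by
  have hMx : x ⬝ᵥ M *ᵥ x = 0 := by
    have h := congrArg (x ⬝ᵥ ·) hx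
    simpa only [sub_mulVec, dotProduct_sub, dotProduct_Cmat_mulVec_of_last_eq_zero k ylow i hlast,
      dotProduct_zero, zero_sub, neg_eq_zero] using h
  have hker : ∀ j, (Cmat k ylow j - M) *ᵥ x = 0 := fun j =>
    (hM j).dotProduct_mulVec_zero_iff x |>.mp <| by
      rw [star_trivial, sub_mulVec, dotProduct_sub, hMx,
        dotProduct_Cmat_mulVec_of_last_eq_zero k ylow j hlast, sub_zero]
  have hM0 : M *ᵥ x = 0 := by simpa [Cmat_zero, neg_mulVec] using hker 0
  ext a
  cases a using Fin.lastCases with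
  | last => exact hlast
  | cast i =>
    have := congrFun (hker i.succ) (Fin.last k)
    rw [sub_mulVec, hM0, sub_zero, Cmat_succ_mulVec_of_last_eq_zero k ylow i hlast] at this
    simpa using this

lemma KKTpair.isKKT {k : ℕ} {ylow : ℝ} {Ω M : Matrix (Fin (k + 1)) (Fin (k + 1)) ℝ}
    {Y : Fin (k + 1) → Matrix (Fin (k + 1)) (Fin (k + 1)) ℝ} (h : KKTpair k ylow Ω M Y) :
    IsKKT (Cmat k ylow) Ω M Y :=
  ⟨h.1.2, h.2.1, h.2.2.1, h.2.2.2⟩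

theorem KKTpair_unique_general (k : ℕ) (ylow : ℝ)
    (Ω : Matrix (Fin (k + 1)) (Fin (k + 1)) ℝ) (hΩ : Ω.PosDef)
    (M₁ M₂ : Matrix (Fin (k + 1)) (Fin (k + 1)) ℝ)
    (Y₁ Y₂ : Fin (k + 1) → Matrix (Fin (k + 1)) (Fin (k + 1)) ℝ)
    (h₁ : KKTpair k ylow Ω M₁ Y₁) (h₂ : KKTpair k ylow Ω M₂ Y₂) :
    M₁ = M₂ ∧ ∀ i, Y₁ i = Y₂ i := by
  obtain rfl : M₁ = M₂ := h₁.isKKT.eq hΩ.isUnit h₂.isKKT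
  choose w hw using fun i => exists_forall_mulVec_eq_zero_eq_smul (Fin.last k)
    fun x hx hlast => eq_zero_of_Cmat_sub_mulVec_eq_zero h₁.isKKT.feasible hx hlast
  have hY : ∀ Y, IsKKT (Cmat k ylow) Ω M₁ Y →
      ∀ i, Y i = Y i (Fin.last k) (Fin.last k) • vecMulVec (w i) (w i) := fun Y h i =>
    eq_smul_vecMulVec_of_mul_eq_zero _ (hw i) (isHermitian_iff_isSymm.mp (h.posSemidef i).1)
      (h.sub_mul_eq_zero i)
  have hsum : ∀ Y, IsKKT (Cmat k ylow) Ω M₁ Y →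
      ∑ i, Y i (Fin.last k) (Fin.last k) • vecMulVec (w i) (w i) = Ω := fun Y h =>
    (Finset.sum_congr rfl fun i _ => (hY Y h i).symm).trans h.sum_eq
  have hc := eq_of_sum_smul_vecMulVec_eq (w := w) ((hsum Y₁ h₁.isKKT).symm ▸ hΩ.isUnit)
    ((hsum Y₁ h₁.isKKT).trans (hsum Y₂ h₂.isKKT).symm)
  exact ⟨rfl, fun i => by rw [hY Y₁ h₁.isKKT i, hY Y₂ h₂.isKKT i, congrFun hc i]⟩

/-- **Uniqueness of the primal and dual solutions of (P)** (part (ii) of the proof of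
Lemma 3 of the paper): two KKT pairs for (P) at a positive definite `Ω` coincide. -/
theorem KKTpair_unique (k : ℕ) (hk : 1 ≤ k) (ylow : ℝ)
    (Ω : Matrix (Fin (k + 1)) (Fin (k + 1)) ℝ) (hΩ : Ω.PosDef)
    (M₁ M₂ : Matrix (Fin (k + 1)) (Fin (k + 1)) ℝ)
    (Y₁ Y₂ : Fin (k + 1) → Matrix (Fin (k + 1)) (Fin (k + 1)) ℝ)
    (h₁ : KKTpair k ylow Ω M₁ Y₁) (h₂ : KKTpair k ylow Ω M₂ Y₂) :
    M₁ = M₂ ∧ ∀ i, Y₁ i = Y₂ i :=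
  KKTpair_unique_general k ylow Ω hΩ M₁ M₂ Y₁ Y₂ h₁ h₂
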